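/- arXiv:1611.04874 — 2 statements merged into one kernel-verified Lean document; each statement's English description precedes it below -/
import Mathlib

section
/- For any α > 0, β ≥ 0 and 0 ≤ λ < β², the integral ∫₀^∞ e^(-2αt) · ((β² - λ)^(-1/2) e^(-βt) sinh((β² - λ)^(1/2) t))² dt equals 1 / (4(α + β)(α² + 2αβ + λ)). -/
/-!
With `γ = √(β² - λ)` the integrand is `γ⁻² e^{-2(α+β)t} sinh²(γt)`. Expanding `sinh²` into
exponentials turns `∫₀^∞ e^{-2at} sinh²(γt) dt` into three integrals `∫₀^∞ e^{-bt} dt = 1/b`,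
which converge as long as `|γ| < a`, and sum to `γ² / (4a(a² - γ²))`. For `a = α + β` the
factor `γ²` cancels and `a² - γ² = α² + 2αβ + λ`.
-/

open MeasureTheory Set Real

lemma integral_exp_neg_mul_Ioi_zero {b : ℝ} (hb : 0 < b) :
    ∫ t in Ioi (0 : ℝ), exp (-b * t) = b⁻¹ := by
  rw [integral_exp_mul_Ioi (neg_lt_zero.mpr hb), mul_zero, exp_zero, neg_div_neg_eq, one_div]

lemma exp_neg_two_mul_mul_sinh_sq (a γ t : ℝ) :
    exp (-(2 * a) * t) * sinh (γ * t) ^ 2 =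
      (exp (-(2 * (a - γ)) * t) - 2 * exp (-(2 * a) * t) + exp (-(2 * (a + γ)) * t)) / 4 := by
  have hsub : -(2 * (a - γ)) * t = γ * t + γ * t + -(2 * a) * t := by ring
  have hadd : -(2 * (a + γ)) * t = -(γ * t) + -(γ * t) + -(2 * a) * t := by ring
  rw [hsub, hadd, sinh_eq, exp_add, exp_add, exp_add, exp_add, exp_neg]
  field_simp
  ring

theorem integral_exp_neg_two_mul_mul_sinh_sq {a γ : ℝ} (h : |γ| < a) :
    ∫ t in Ioi (0 : ℝ), exp (-(2 * a) * t) * sinh (γ * t) ^ 2 = γ ^ 2 / (4 * a * (a ^ 2 - γ ^ 2)) := by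
  obtain ⟨hγa, hγa'⟩ := abs_lt.mp h
  have ha : 0 < a := (abs_nonneg γ).trans_lt h
  have h₁ : 0 < 2 * (a - γ) := by linarith
  have h₂ : 0 < 2 * a := by linarith
  have h₃ : 0 < 2 * (a + γ) := by linarith
  have i₁ := integrableOn_exp_mul_Ioi (neg_lt_zero.mpr h₁) 0
  have i₂ := (integrableOn_exp_mul_Ioi (neg_lt_zero.mpr h₂) 0).const_mul 2
  have i₃ := integrableOn_exp_mul_Ioi (neg_lt_zero.mpr h₃) 0
  have i₁₂ : IntegrableOn
      (fun t => exp (-(2 * (a - γ)) * t) - 2 * exp (-(2 * a) * t)) (Ioi 0) := i₁.sub i₂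
  simp_rw [exp_neg_two_mul_mul_sinh_sq]
  rw [integral_div, integral_add i₁₂ i₃, integral_sub i₁ i₂, integral_const_mul,
    integral_exp_neg_mul_Ioi_zero h₁, integral_exp_neg_mul_Ioi_zero h₂,
    integral_exp_neg_mul_Ioi_zero h₃, show a ^ 2 - γ ^ 2 = (a - γ) * (a + γ) by ring]
  have : a - γ ≠ 0 := by linarith
  have : a + γ ≠ 0 := by linarith
  field_simp
  ring

theorem stmt_5 (α β lam : ℝ) (hα : 0 < α) (hβ : 0 ≤ β)
    (hlam0 : 0 ≤ lam) (hlam : lam < β ^ 2) :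
    ∫ t in Set.Ioi (0 : ℝ),
      Real.exp (-(2 * α) * t) *
        ((β ^ 2 - lam) ^ (-(1 : ℝ) / 2) * Real.exp (-β * t) *
          Real.sinh ((β ^ 2 - lam) ^ ((1 : ℝ) / 2) * t)) ^ 2
      = 1 / (4 * (α + β) * (α ^ 2 + 2 * α * β + lam)) := by
  have hpos : 0 < β ^ 2 - lam := by linarith
  set γ := (β ^ 2 - lam) ^ ((1 : ℝ) / 2)
  have hγ : γ = √(β ^ 2 - lam) := (sqrt_eq_rpow _).symm
  have hγ_sq : γ ^ 2 = β ^ 2 - lam := by rw [hγ, sq_sqrt hpos.le]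
  have hγ_inv : (β ^ 2 - lam) ^ (-(1 : ℝ) / 2) = γ⁻¹ := by rw [neg_div, rpow_neg hpos.le]
  have hγ_lt : |γ| < α + β := by
    rw [hγ, abs_of_nonneg (sqrt_nonneg _), sqrt_lt' (by linarith)]
    nlinarith
  have hintegrand : ∀ t : ℝ, exp (-(2 * α) * t) * (γ⁻¹ * exp (-β * t) * sinh (γ * t)) ^ 2 =
      (γ ^ 2)⁻¹ * (exp (-(2 * (α + β)) * t) * sinh (γ * t) ^ 2) := by
    intro t
    rw [show -(2 * (α + β)) * t = -(2 * α) * t + -β * t + -β * t by ring, exp_add, exp_add]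
    ring
  simp_rw [hγ_inv, hintegrand]
  rw [integral_const_mul, integral_exp_neg_two_mul_mul_sinh_sq hγ_lt, hγ_sq,
    show (α + β) ^ 2 - (β ^ 2 - lam) = α ^ 2 + 2 * α * β + lam by ring]
  have : α ^ 2 + 2 * α * β + lam ≠ 0 := by positivity
  field_simp
end

section
/- For β > 0 and t ≥ 0, the supremum over λ ≥ 0 of |V_β(λ,t)| equals β^(-1) e^(-βt) sinh(βt), where V_β(λ,t) = (β²-λ)^(-1/2) e^(-βt) sinh((β²-λ)^(1/2) t) for λ < β², V_β(β²,t) = t e^(-βt), and V_β(λ,t) = (λ-β²)^(-1/2) e^(-βt) sin((λ-β²)^(1/2) t) for λ > β². -/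
/-!
Write `s = √|β² - λ|`. For `λ < β²` one has `|V λ| = e^{-βt} sinh(st)/s`, and `s ↦ sinh(st)/s` is the
slope from the origin of the convex function `s ↦ sinh(st)`, hence increasing; so this branch is
largest at `λ = 0`, where `s = β`. For `λ ≥ β²`, `|sin(st)|/s ≤ t ≤ sinh(βt)/β` bounds the other
branches by the same value.
-/

open Real Set

lemma convexOn_sinh_mul {t : ℝ} (ht : 0 ≤ t) : ConvexOn ℝ (Ici 0) (fun s => sinh (s * t)) := by
  have hderiv : deriv (fun s => sinh (s * t)) = fun s => cosh (s * t) * t := by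
    ext s; exact ((hasDerivAt_mul_const t).sinh).deriv
  refine MonotoneOn.convexOn_of_deriv (convex_Ici 0) (by fun_prop) (by fun_prop) ?_
  rw [hderiv, interior_Ici]
  intro x hx y hy hxy
  have habs : |x * t| ≤ |y * t| := by
    rw [abs_of_nonneg (mul_nonneg (le_of_lt hx) ht), abs_of_nonneg (mul_nonneg (le_of_lt hy) ht)]
    exact mul_le_mul_of_nonneg_right hxy ht
  exact mul_le_mul_of_nonneg_right (cosh_le_cosh.2 habs) ht

lemma monotoneOn_sinh_mul_div {t : ℝ} (ht : 0 ≤ t) :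
    MonotoneOn (fun s => sinh (s * t) / s) (Ioi 0) := by
  have hslope := (convexOn_sinh_mul ht).monotoneOn_slope_gt (x := 0) self_mem_Ici
  intro x hx y hy hxy
  simpa [slope_def_field] using hslope ⟨mem_Ici.2 hx.le, hx⟩ ⟨mem_Ici.2 hy.le, hy⟩ hxy

lemma le_sinh_mul_div {b t : ℝ} (hb : 0 < b) (ht : 0 ≤ t) : t ≤ sinh (b * t) / b := by
  rw [le_div_iff₀ hb, mul_comm]
  exact self_le_sinh_iff.2 (mul_nonneg hb.le ht)

lemma abs_sin_mul_div_le {u t : ℝ} (hu : 0 < u) (ht : 0 ≤ t) : |sin (u * t)| / u ≤ t := by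
  rw [div_le_iff₀ hu, mul_comm t]
  exact abs_sin_le_abs.trans_eq (abs_of_nonneg (mul_nonneg hu.le ht))

lemma rpow_neg_one_half {c : ℝ} (hc : 0 ≤ c) : c ^ (-(1 : ℝ) / 2) = (c ^ ((1 : ℝ) / 2))⁻¹ := by
  rw [neg_div, rpow_neg hc]

lemma sq_rpow_one_half {b : ℝ} (hb : 0 ≤ b) : (b ^ 2) ^ ((1 : ℝ) / 2) = b := by
  rw [← sqrt_eq_rpow, sqrt_sq hb]

theorem stmt_9 (β t : ℝ) (hβ : 0 < β) (ht : 0 ≤ t)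
    (V : ℝ → ℝ)
    (hlt : ∀ lam : ℝ, lam < β ^ 2 → V lam =
      (β ^ 2 - lam) ^ (-(1 : ℝ) / 2) * Real.exp (-β * t) *
        Real.sinh ((β ^ 2 - lam) ^ ((1 : ℝ) / 2) * t))
    (heq : V (β ^ 2) = t * Real.exp (-β * t))
    (hgt : ∀ lam : ℝ, β ^ 2 < lam → V lam =
      (lam - β ^ 2) ^ (-(1 : ℝ) / 2) * Real.exp (-β * t) *
        Real.sin ((lam - β ^ 2) ^ ((1 : ℝ) / 2) * t)) :
    sSup ((fun lam => |V lam|) '' Set.Ici (0 : ℝ))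
      = β⁻¹ * Real.exp (-β * t) * Real.sinh (β * t) := by
  set e := exp (-β * t)
  have he : 0 < e := exp_pos _
  have hte : t * e ≤ e * (sinh (β * t) / β) := by
    rw [mul_comm]; exact mul_le_mul_of_nonneg_left (le_sinh_mul_div hβ ht) he.le
  rw [show β⁻¹ * e * sinh (β * t) = e * (sinh (β * t) / β) by ring]
  refine IsGreatest.csSup_eq ⟨⟨0, self_mem_Ici, ?_⟩, ?_⟩
  · have hV0 := hlt 0 (by positivity)
    rw [sub_zero, rpow_neg_one_half (by positivity), sq_rpow_one_half hβ.le] at hV0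
    dsimp only
    rw [hV0, abs_of_nonneg (by positivity)]
    ring
  rintro _ ⟨lam, hlam_nonneg, rfl⟩
  dsimp only
  rcases lt_trichotomy lam (β ^ 2) with hlam | rfl | hlam
  · have hc : 0 < β ^ 2 - lam := by linarith
    set s := (β ^ 2 - lam) ^ ((1 : ℝ) / 2)
    have hs : 0 < s := rpow_pos_of_pos hc _
    have hsβ : s ≤ β := by
      rw [← sq_rpow_one_half hβ.le]
      exact rpow_le_rpow hc.le (by linarith [mem_Ici.1 hlam_nonneg]) (by norm_num)
    have hV : V lam = e * (sinh (s * t) / s) := by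
      rw [hlt lam hlam, rpow_neg_one_half hc.le]; ring
    rw [hV, abs_of_nonneg (by have := sinh_nonneg_iff.2 (mul_nonneg hs.le ht); positivity)]
    exact mul_le_mul_of_nonneg_left (monotoneOn_sinh_mul_div ht hs hβ hsβ) he.le
  · rw [heq, abs_of_nonneg (by positivity)]
    exact hte
  · have hc : 0 < lam - β ^ 2 := by linarith
    set u := (lam - β ^ 2) ^ ((1 : ℝ) / 2)
    have hu : 0 < u := rpow_pos_of_pos hc _
    have hV : V lam = e * (sin (u * t) / u) := by
      rw [hgt lam hlam, rpow_neg_one_half hc.le]; ring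
    calc |V lam| = e * (|sin (u * t)| / u) := by
          rw [hV, abs_mul, abs_div, abs_of_pos he, abs_of_pos hu]
      _ ≤ e * t := mul_le_mul_of_nonneg_left (abs_sin_mul_div_le hu ht) he.le
      _ ≤ e * (sinh (β * t) / β) := by rw [mul_comm]; exact hte
end
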